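/- Phantom Clipping identity: Let a_S ∈ {0,1}^(L×M) have one-hot rows, let a_C ∈ ℝ^(M×M) be the identity matrix, let ∇e_S ∈ ℝ^(L×d) and ∇e_C ∈ ℝ^(M×d). Define g_E = a_Sᵀ ∇e_S + a_Cᵀ ∇e_C. Then ‖g_E‖_F² = ⟨a_S a_Sᵀ, ∇e_S ∇e_Sᵀ⟩_F + ‖∇e_C‖_F² + 2⟨∇e_S, a_S ∇e_C⟩_F. -/
import Mathlib


/-- Frobenius inner product of two matrices of the same shape. -/
def frob {L d : Type*} [Fintype L] [Fintype d] (X Y : Matrix L d ℝ) : ℝ :=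
  ∑ i, ∑ j, X i j * Y i j

lemma frob_eq_trace {L d : Type*} [Fintype L] [Fintype d] (X Y : Matrix L d ℝ) :
    frob X Y = Matrix.trace (X.transpose * Y) := by
  simp only [frob, Matrix.trace, Matrix.diag, Matrix.mul_apply, Matrix.transpose_apply]
  rw [Finset.sum_comm]

/-- Phantom Clipping identity. -/
theorem phantom_clipping (L M d : ℕ)
    (aS : Matrix (Fin L) (Fin M) ℝ)
    (honehot : ∀ i : Fin L, ∃ j : Fin M, aS i = fun j' => if j' = j then 1 else 0)
    (aC : Matrix (Fin M) (Fin M) ℝ) (haC : aC = 1)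
    (geS : Matrix (Fin L) (Fin d) ℝ) (geC : Matrix (Fin M) (Fin d) ℝ)
    (gE : Matrix (Fin M) (Fin d) ℝ)
    (hgE : gE = aS.transpose * geS + aC.transpose * geC) :
    frob gE gE =
      frob (aS * aS.transpose) (geS * geS.transpose) + frob geC geC
        + 2 * frob geS (aS * geC) := by
  subst haC hgE
  simp only [frob_eq_trace, Matrix.transpose_one, Matrix.one_mul, Matrix.transpose_add,
    Matrix.transpose_mul, Matrix.transpose_transpose, Matrix.add_mul, Matrix.mul_add,
    Matrix.trace_add]
  have h1 : Matrix.trace (geS.transpose * aS * (aS.transpose * geS))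
      = Matrix.trace (aS * aS.transpose * (geS * geS.transpose)) := by
    rw [← Matrix.mul_assoc, Matrix.trace_mul_comm, ← Matrix.mul_assoc, ← Matrix.mul_assoc,
      Matrix.mul_assoc, Matrix.trace_mul_comm]
  have h2 : Matrix.trace (geC.transpose * (aS.transpose * geS))
      = Matrix.trace (geS.transpose * (aS * geC)) := by
    rw [← Matrix.mul_assoc, Matrix.trace_mul_comm, ← Matrix.transpose_mul]
    nth_rewrite 1 [← Matrix.trace_transpose]
    rw [Matrix.transpose_mul, Matrix.transpose_transpose, Matrix.trace_mul_comm]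
  have h3 : Matrix.trace (geS.transpose * aS * geC)
      = Matrix.trace (geS.transpose * (aS * geC)) := by rw [Matrix.mul_assoc]
  rw [h1, h2, h3]; ring
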